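/- Let G be a torsion-free directed partially ordered group and n ≥ 1. Then the pseudo-effect algebra Γ(ℤ ⃗× G, (n,0)) enjoys unique extraction of roots of 1: if a, b ∈ Γ(ℤ ⃗× G, (n,0)), k·a and k·b exist, and k·a = (n,0) = k·b, then a = b. -/

import Mathlib

/-- A pseudo-effect algebra (PEA): a structure with a partial addition `add`
(with domain of definition `D`), a zero and a one, satisfying (PE1)-(PE4)
together with the (derivable) neutrality of zero. -/
structure PEA (E : Type) where
  /-- `D a b` means that the partial sum `a + b` is defined. -/
  D : E → E → Prop
  /-- The partial addition (its value is relevant only when `D a b` holds). -/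
  add : E → E → E
  zero : E
  one : E
  /-- (PE1), definedness part. -/
  assoc_defined : ∀ a b c, (D a b ∧ D (add a b) c) ↔ (D b c ∧ D a (add b c))
  /-- (PE1), equality part. -/
  assoc_eq : ∀ a b c, D a b → D (add a b) c → add (add a b) c = add a (add b c)
  /-- (PE2), right complement. -/
  compl_right : ∀ a, ∃! d, D a d ∧ add a d = one
  /-- (PE2), left complement. -/
  compl_left : ∀ a, ∃! e, D e a ∧ add e a = one
  /-- (PE3). -/
  pe3 : ∀ a b, D a b →
    (∃ d, D d a ∧ add d a = add a b) ∧ (∃ e, D b e ∧ add b e = add a b)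
  /-- (PE4). -/
  pe4_right : ∀ a, D a one → a = zero
  pe4_left : ∀ a, D one a → a = zero
  D_zero_right : ∀ a, D a zero
  D_zero_left : ∀ a, D zero a
  add_zero : ∀ a, add a zero = a
  zero_add : ∀ a, add zero a = a

namespace PEA

variable {E : Type} (P : PEA E)

/-- The induced partial order: `a ≤ b` iff `a + c = b` for some `c`. -/
def le (a b : E) : Prop := ∃ c, P.D a c ∧ P.add a c = b

/-- The left complement `a⁻`, the unique element with `a⁻ + a = 1`. -/
noncomputable def lneg (a : E) : E := (P.compl_left a).choose

/-- The right complement `a~`, the unique element with `a + a~ = 1`. -/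
noncomputable def rneg (a : E) : E := (P.compl_right a).choose

/-- `E` is weakly commutative if `a + b` is defined iff `b + a` is defined. -/
def WeaklyCommutative : Prop := ∀ a b, P.D a b ↔ P.D b a

/-- `E` is symmetric if the two complements coincide. -/
def Symmetric : Prop := ∀ a, P.lneg a = P.rneg a

/-- A state on a PEA: a `[0,1]`-valued map, additive on existing sums, sending
`0 ↦ 0` and `1 ↦ 1`. -/
def IsState (s : E → ℝ) : Prop :=
  s P.zero = 0 ∧ s P.one = 1 ∧ (∀ a, 0 ≤ s a ∧ s a ≤ 1) ∧
    ∀ a b, P.D a b → s (P.add a b) = s a + s b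

/-- An `(n+1)`-valued discrete state: a state whose range is `{0, 1/n, …, 1}`. -/
def IsDiscreteState (n : ℕ) (s : E → ℝ) : Prop :=
  P.IsState s ∧ Set.range s = {x : ℝ | ∃ i ≤ n, x = (i : ℝ) / n}

/-- An ideal: a nonempty downward closed subset closed under existing sums. -/
def IsIdeal (I : Set E) : Prop :=
  I.Nonempty ∧ (∀ a i, i ∈ I → P.le a i → a ∈ I) ∧
    ∀ i j, i ∈ I → j ∈ I → P.D i j → P.add i j ∈ I

/-- A normal ideal: `a + i = j + a` implies `i ∈ I ↔ j ∈ I`. -/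
def IsNormalIdeal (I : Set E) : Prop :=
  P.IsIdeal I ∧ ∀ a i j, P.D a i → P.D j a → P.add a i = P.add j a → (i ∈ I ↔ j ∈ I)

/-- A maximal ideal: proper and not properly contained in a proper ideal. -/
def IsMaximalIdeal (I : Set E) : Prop :=
  P.IsIdeal I ∧ P.one ∉ I ∧ ∀ J, P.IsIdeal J → P.one ∉ J → I ⊆ J → I = J

/-- `n`-fold partial multiple of an element. -/
def nmul : ℕ → E → E
  | 0, _ => P.zero
  | k + 1, a => P.add (nmul k a) a

/-- Definedness of the `n`-fold partial multiple. -/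
def nmulD : ℕ → E → Prop
  | 0, _ => True
  | k + 1, a => nmulD k a ∧ P.D (P.nmul k a) a

/-- The set of elements of infinite isotropic index. -/
def Infinit : Set E := {a | ∀ k, P.nmulD k a}

/-- An `n`-decomposition of a PEA. -/
def IsNDecomp (n : ℕ) (F : ℕ → Set E) : Prop :=
  (∀ i, i ≤ n → (F i).Nonempty) ∧
  (∀ i j, i ≤ n → j ≤ n → i ≠ j → F i ∩ F j = ∅) ∧
  ((⋃ i ∈ Set.Iic n, F i) = Set.univ) ∧
  (∀ i, i ≤ n → P.lneg '' F i = F (n - i) ∧ P.rneg '' F i = F (n - i)) ∧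
  (∀ i j, i ≤ n → j ≤ n → ∀ x ∈ F i, ∀ y ∈ F j, P.D x y →
     i + j ≤ n ∧ P.add x y ∈ F (i + j))

/-- An `n`-perfect PEA: an `n`-decomposition with all sums `Eᵢ + Eⱼ`, `i+j < n`,
existing, and whose bottom slice is the unique maximal ideal. -/
def IsNPerfect (n : ℕ) (F : ℕ → Set E) : Prop :=
  P.IsNDecomp n F ∧
  (∀ i j, i + j < n → ∀ x ∈ F i, ∀ y ∈ F j, P.D x y) ∧
  (P.IsMaximalIdeal (F 0) ∧ ∀ J, P.IsMaximalIdeal J → J = F 0)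

end PEA

set_option linter.unusedSectionVars false
section IntervalPEA

variable {H : Type} [AddGroup H] [PartialOrder H]
  [CovariantClass H H (· + ·) (· ≤ ·)]
  [CovariantClass H H (Function.swap (· + ·)) (· ≤ ·)]

/-- The carrier of the interval `Γ(H, u) = [0, u]` in a po-group `H`. -/
def GammaSet (u : H) : Type := {x : H // 0 ≤ x ∧ x ≤ u}

namespace GammaInterval

variable (u : H) (hu : 0 ≤ u)

/-- Definedness of the partial addition of `Γ(H,u)`. -/
def gD (a b : GammaSet u) : Prop := a.1 + b.1 ≤ u

open Classical in
/-- The partial addition of `Γ(H,u)` (junk value `0` outside its domain). -/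
noncomputable def gadd (a b : GammaSet u) : GammaSet u :=
  if h : a.1 + b.1 ≤ u then ⟨a.1 + b.1, add_nonneg a.2.1 b.2.1, h⟩
  else ⟨0, le_refl 0, hu⟩

lemma gadd_val {a b : GammaSet u} (h : gD u a b) :
    (gadd u hu a b).1 = a.1 + b.1 := by
  have h' : a.1 + b.1 ≤ u := h
  simp only [gadd]
  exact congrArg (fun x : GammaSet u => x.1) (dif_pos h')

/-- The interval `Γ(H, u)` as a pseudo-effect algebra. -/
noncomputable def Gamma : PEA (GammaSet u) where
  D := gD u
  add := gadd u hu
  zero := ⟨0, le_refl 0, hu⟩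
  one := ⟨u, hu, le_refl u⟩
  assoc_defined := by
    intro a b c
    constructor
    · rintro ⟨h1, h2⟩
      have h2a : (gadd u hu a b).1 + c.1 ≤ u := h2
      have h2' : a.1 + b.1 + c.1 ≤ u := by rwa [gadd_val u hu h1] at h2a
      have h3 : a.1 + (b.1 + c.1) ≤ u := by rwa [← add_assoc]
      have hbc : gD u b c := le_trans (le_add_of_nonneg_left a.2.1) h3
      refine ⟨hbc, ?_⟩
      show a.1 + (gadd u hu b c).1 ≤ u
      rwa [gadd_val u hu hbc]
    · rintro ⟨h1, h2⟩
      have h2a : a.1 + (gadd u hu b c).1 ≤ u := h2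
      have h2' : a.1 + (b.1 + c.1) ≤ u := by rwa [gadd_val u hu h1] at h2a
      have hab : gD u a b :=
        le_trans (add_le_add_right (le_add_of_nonneg_right c.2.1) a.1) h2'
      refine ⟨hab, ?_⟩
      show (gadd u hu a b).1 + c.1 ≤ u
      rw [gadd_val u hu hab, add_assoc]
      exact h2'
  assoc_eq := by
    intro a b c h1 h2
    have h2' : a.1 + b.1 + c.1 ≤ u := by
      have h2a : (gadd u hu a b).1 + c.1 ≤ u := h2
      rwa [gadd_val u hu h1] at h2a
    have h3 : a.1 + (b.1 + c.1) ≤ u := by rwa [← add_assoc]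
    have hbc : gD u b c := le_trans (le_add_of_nonneg_left a.2.1) h3
    have habc : gD u a (gadd u hu b c) := by
      show a.1 + (gadd u hu b c).1 ≤ u
      rwa [gadd_val u hu hbc]
    apply Subtype.ext
    rw [gadd_val u hu h2, gadd_val u hu h1, gadd_val u hu habc, gadd_val u hu hbc,
      add_assoc]
  compl_right := by
    intro a
    have h1 : (0 : H) ≤ -a.1 + u := by
      rw [le_neg_add_iff_add_le, add_zero]; exact a.2.2
    have h2 : -a.1 + u ≤ u := by
      simpa using add_le_add_right (neg_nonpos.mpr a.2.1) u
    have hD : gD u a ⟨-a.1 + u, h1, h2⟩ := by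
      show a.1 + (-a.1 + u) ≤ u
      rw [add_neg_cancel_left]
    refine ⟨⟨-a.1 + u, h1, h2⟩, ⟨hD, ?_⟩, ?_⟩
    · apply Subtype.ext
      rw [gadd_val u hu hD]
      exact add_neg_cancel_left a.1 u
    · rintro y ⟨hy1, hy2⟩
      apply Subtype.ext
      have hv := congrArg Subtype.val hy2
      rw [gadd_val u hu hy1] at hv
      show y.1 = -a.1 + u
      rw [eq_neg_add_iff_add_eq]
      exact hv
  compl_left := by
    intro a
    have h1 : (0 : H) ≤ u + -a.1 := by
      simpa using add_le_add_right a.2.2 (-a.1)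
    have h2 : u + -a.1 ≤ u := by
      simpa using add_le_add_left (neg_nonpos.mpr a.2.1) u
    have hD : gD u ⟨u + -a.1, h1, h2⟩ a := by
      show (u + -a.1) + a.1 ≤ u
      rw [neg_add_cancel_right]
    refine ⟨⟨u + -a.1, h1, h2⟩, ⟨hD, ?_⟩, ?_⟩
    · apply Subtype.ext
      rw [gadd_val u hu hD]
      exact neg_add_cancel_right u a.1
    · rintro y ⟨hy1, hy2⟩
      apply Subtype.ext
      have hv := congrArg Subtype.val hy2
      rw [gadd_val u hu hy1] at hv
      show y.1 = u + -a.1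
      rw [eq_add_neg_iff_add_eq]
      exact hv
  pe3 := by
    intro a b h
    constructor
    · have h1 : (0 : H) ≤ a.1 + b.1 + -a.1 := by
        have : a.1 + 0 + -a.1 ≤ a.1 + b.1 + -a.1 :=
          add_le_add_left (add_le_add_right b.2.1 a.1) (-a.1)
        simpa using this
      have h2 : a.1 + b.1 + -a.1 ≤ u := by
        calc a.1 + b.1 + -a.1 ≤ u + -a.1 := add_le_add_left h (-a.1)
          _ ≤ u + 0 := add_le_add_right (neg_nonpos.mpr a.2.1) u
          _ = u := add_zero u
      have hD : gD u ⟨a.1 + b.1 + -a.1, h1, h2⟩ a := by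
        show (a.1 + b.1 + -a.1) + a.1 ≤ u
        rw [neg_add_cancel_right]
        exact h
      refine ⟨⟨a.1 + b.1 + -a.1, h1, h2⟩, hD, ?_⟩
      apply Subtype.ext
      rw [gadd_val u hu hD, gadd_val u hu h]
      exact neg_add_cancel_right (a.1 + b.1) a.1
    · have h1 : (0 : H) ≤ -b.1 + (a.1 + b.1) := by
        have : -b.1 + b.1 ≤ -b.1 + (a.1 + b.1) :=
          add_le_add_right (le_add_of_nonneg_left a.2.1) (-b.1)
        simpa using this
      have h2 : -b.1 + (a.1 + b.1) ≤ u := by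
        calc -b.1 + (a.1 + b.1) ≤ -b.1 + u := add_le_add_right h (-b.1)
          _ ≤ 0 + u := add_le_add_left (neg_nonpos.mpr b.2.1) u
          _ = u := zero_add u
      have hD : gD u b ⟨-b.1 + (a.1 + b.1), h1, h2⟩ := by
        show b.1 + (-b.1 + (a.1 + b.1)) ≤ u
        rw [add_neg_cancel_left]
        exact h
      refine ⟨⟨-b.1 + (a.1 + b.1), h1, h2⟩, hD, ?_⟩
      apply Subtype.ext
      rw [gadd_val u hu hD, gadd_val u hu h]
      exact add_neg_cancel_left b.1 (a.1 + b.1)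
  pe4_right := by
    intro a h
    apply Subtype.ext
    have h' : a.1 + u ≤ u := h
    have h'' : a.1 + u + -u ≤ u + -u := add_le_add_left h' (-u)
    simp only [add_neg_cancel_right, add_neg_cancel] at h''
    exact le_antisymm h'' a.2.1
  pe4_left := by
    intro a h
    apply Subtype.ext
    have h' : u + a.1 ≤ u := h
    have h'' : -u + (u + a.1) ≤ -u + u := add_le_add_right h' (-u)
    simp only [neg_add_cancel_left, neg_add_cancel] at h''
    exact le_antisymm h'' a.2.1
  D_zero_right := by
    intro a
    show a.1 + 0 ≤ u
    simpa using a.2.2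
  D_zero_left := by
    intro a
    show 0 + a.1 ≤ u
    simpa using a.2.2
  add_zero := by
    intro a
    apply Subtype.ext
    have h : gD u a ⟨0, le_refl 0, hu⟩ := by
      show a.1 + 0 ≤ u; simpa using a.2.2
    rw [gadd_val u hu h]
    exact add_zero a.1
  zero_add := by
    intro a
    apply Subtype.ext
    have h : gD u ⟨0, le_refl 0, hu⟩ a := by
      show 0 + a.1 ≤ u; simpa using a.2.2
    rw [gadd_val u hu h]
    exact zero_add a.1

end GammaInterval

end IntervalPEA

section ZLexSection

/-- The lexicographic product `ℤ ⃗× G`. -/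
def ZLex (G : Type) : Type := ℤ × G

namespace ZLex

variable {G : Type} [AddGroup G] [PartialOrder G]
  [CovariantClass G G (· + ·) (· ≤ ·)]
  [CovariantClass G G (Function.swap (· + ·)) (· ≤ ·)]

instance : AddGroup (ZLex G) := inferInstanceAs (AddGroup (ℤ × G))

/-- Build an element of `ℤ ⃗× G`. -/
def mk (i : ℤ) (g : G) : ZLex G := ((i, g) : ℤ × G)

/-- First (integer) component. -/
def idx (x : ZLex G) : ℤ := (x : ℤ × G).1

/-- Second (group) component. -/
def snd (x : ZLex G) : G := (x : ℤ × G).2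

instance : PartialOrder (ZLex G) where
  le p q := idx p < idx q ∨ (idx p = idx q ∧ snd p ≤ snd q)
  le_refl p := Or.inr ⟨rfl, le_refl _⟩
  le_trans p q r := by
    rintro (h | ⟨e, h⟩) (h' | ⟨e', h'⟩)
    · exact Or.inl (lt_trans h h')
    · exact Or.inl (lt_of_lt_of_eq h e')
    · exact Or.inl (lt_of_eq_of_lt e h')
    · exact Or.inr ⟨e.trans e', le_trans h h'⟩
  le_antisymm p q := by
    rintro (h | ⟨e, h⟩) (h' | ⟨e', h'⟩)
    · exact absurd (lt_trans h h') (lt_irrefl _)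
    · exact absurd h (by rw [e']; exact lt_irrefl _)
    · exact absurd h' (by rw [e]; exact lt_irrefl _)
    · have h2 : snd p = snd q := le_antisymm h h'
      show ((idx p, snd p) : ℤ × G) = ((idx q, snd q) : ℤ × G)
      rw [e, h2]

lemma le_def (p q : ZLex G) :
    p ≤ q ↔ idx p < idx q ∨ (idx p = idx q ∧ snd p ≤ snd q) := Iff.rfl

lemma add_def (p q : ZLex G) :
    p + q = mk (idx p + idx q) (snd p + snd q) := rfl

instance : CovariantClass (ZLex G) (ZLex G) (· + ·) (· ≤ ·) := by
  constructor
  rintro c a b (h | ⟨e, h⟩)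
  · exact Or.inl (Int.add_lt_add_left h _)
  · exact Or.inr ⟨by show idx c + idx a = idx c + idx b; rw [e],
      add_le_add_right h _⟩

instance : CovariantClass (ZLex G) (ZLex G) (Function.swap (· + ·)) (· ≤ ·) := by
  constructor
  rintro c a b (h | ⟨e, h⟩)
  · exact Or.inl (Int.add_lt_add_right h _)
  · exact Or.inr ⟨by show idx a + idx c = idx b + idx c; rw [e],
      add_le_add_left h _⟩

end ZLex

end ZLexSection

/- In `Γ(H, u)` the partial multiple `k·a` is the group multiple `k • a`, so
`k·a = (n,0)` says `k • a = (n,0)` in `ℤ ⃗× G`. Comparing components, the integer part of `a`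
is `n / k` and `k • snd a = 0`, so `snd a = 0` by torsion-freeness. -/

namespace GammaInterval

variable {H : Type} [AddGroup H] [PartialOrder H] [AddLeftMono H] [AddRightMono H]

theorem val_nmul {u : H} (hu : 0 ≤ u) {a : GammaSet u} :
    ∀ {k : ℕ}, (Gamma u hu).nmulD k a → ((Gamma u hu).nmul k a).1 = k • a.1
  | 0, _ => (zero_nsmul a.1).symm
  | k + 1, ⟨hk, hD⟩ => by
    rw [succ_nsmul, ← val_nmul hu hk]
    exact gadd_val u hu hD

end GammaInterval

namespace ZLex

variable {G : Type} [AddGroup G]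

theorem ext {x y : ZLex G} (h₁ : idx x = idx y) (h₂ : snd x = snd y) : x = y :=
  Prod.ext h₁ h₂

@[simp] theorem idx_mk (i : ℤ) (g : G) : idx (mk i g) = i := rfl

@[simp] theorem snd_mk (i : ℤ) (g : G) : snd (mk i g) = g := rfl

@[simp] theorem idx_nsmul (k : ℕ) (x : ZLex G) : idx (k • x) = k * idx x :=
  (Prod.smul_fst k (x : ℤ × G)).trans (nsmul_eq_mul k _)

@[simp] theorem snd_nsmul (k : ℕ) (x : ZLex G) : snd (k • x) = k • snd x :=
  Prod.smul_snd k (x : ℤ × G)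

theorem eq_of_nsmul_eq_mk_zero (htf : ∀ (k : ℤ) (g : G), k ≠ 0 → k • g = 0 → g = 0)
    {k : ℕ} (hk : k ≠ 0) {m : ℤ} {x y : ZLex G}
    (hx : k • x = mk m 0) (hy : k • y = mk m 0) : x = y := by
  have hk' : (k : ℤ) ≠ 0 := Int.natCast_ne_zero.mpr hk
  have snd_eq_zero : ∀ z : ZLex G, k • z = mk m 0 → snd z = 0 := fun z hz =>
    htf k (snd z) hk' (by rw [natCast_zsmul, ← snd_nsmul, hz, snd_mk])
  refine ext (mul_left_cancel₀ hk' ?_) ((snd_eq_zero x hx).trans (snd_eq_zero y hy).symm)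
  rw [← idx_nsmul, ← idx_nsmul, hx, hy]

end ZLex

/-- for a torsion-free directed po-group `G`, the PEA
`Γ(ℤ ⃗× G, (n,0))` enjoys unique extraction of roots of `1`. -/
theorem stmt16 (G : Type) [AddGroup G] [PartialOrder G]
    [CovariantClass G G (· + ·) (· ≤ ·)]
    [CovariantClass G G (Function.swap (· + ·)) (· ≤ ·)]
    (n : ℕ) (hn : 1 ≤ n)
    (P : PEA (GammaSet (ZLex.mk (n : ℤ) (0 : G))))
    (hP : P = GammaInterval.Gamma (ZLex.mk (n : ℤ) (0 : G)) (by exact Or.inl (show (0 : ℤ) < (n : ℤ) by exact_mod_cast hn)))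
    (htf : ∀ (k : ℤ) (g : G), k ≠ 0 → k • g = 0 → g = 0) :
    ∀ (k : ℕ) (a b : GammaSet (ZLex.mk (n : ℤ) (0 : G))),
      P.nmulD k a → P.nmulD k b → P.nmul k a = P.one → P.nmul k b = P.one →
        a = b := by
  intro k a b hDa hDb ha hb
  subst hP
  have hva : k • a.1 = ZLex.mk n 0 :=
    (GammaInterval.val_nmul _ hDa).symm.trans (congrArg Subtype.val ha)
  have hvb : k • b.1 = ZLex.mk n 0 :=
    (GammaInterval.val_nmul _ hDb).symm.trans (congrArg Subtype.val hb)
  have hk : k ≠ 0 := by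
    rintro rfl
    have h0 := congrArg ZLex.idx hva
    rw [ZLex.idx_nsmul, ZLex.idx_mk, Nat.cast_zero, zero_mul] at h0
    omega
  exact Subtype.ext (ZLex.eq_of_nsmul_eq_mk_zero htf hk hva hvb)
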